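/- (Tension between participant fairness and speaker fairness) There exists an instance where the schedule achieving perfect speaker fairness (Ψ^S = 0) is unfair to participants (Ψ^P > 0) and the schedule achieving perfect participant fairness (Ψ^P = 0) is unfair to speakers (Ψ^S > 0). Concretely: with two participants, two talks with V_{p_1}(t_1)=V_{p_2}(t_1)=1, V_{p_1}(t_2)=V_{p_2}(t_2)=0.7, and four slots with A_{p_1} = (1,1,0,0.2), A_{p_2} = (1,0,1,0.2): the schedule Γ = {(t_1,s_2),(t_2,s_3)} satisfies NEC_{t_1}(Γ) = NEC_{t_2}(Γ) = 0.5 (so Ψ^S(Γ)=0) but NCG_{p_1}(Γ) = 1/1.7 along with NCG_{p_2}(Γ) = 0.7/1.7 (so Ψ^P(Γ) > 0); while Γ' = {(t_1,s_1),(t_2,s_4)} gives NCG_{p_1}(Γ') = NCG_{p_2}(Γ') = 1.14/1.7 (Ψ^P(Γ')=0) but NEC_{t_1}(Γ') = 1 > 0.2 = NEC_{t_2}(Γ') (Ψ^S(Γ') > 0). -/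

import Mathlib

/-!
Every availability is at most `1`, so `CG p Γ ≤ ∑ t, V t = 1.7` and `∑ p, V t * A p s ≤ 2 * V t`;
both bounds are attained (each participant has two fully available slots, and slot `s₁` suits
everyone). Hence `NCG p Γ = CG p Γ / 1.7`, `NEC t Γ` is the mean availability at the slot of `t`,
and `Ψ` is an absolute difference, after which every claim is arithmetic.
-/

namespace Stmt7

/-- Interest scores for the two talks (same for both participants). -/
noncomputable def V : Fin 2 → ℝ := ![1, 0.7]

/-- Availability scores of the two participants over the four slots. -/
noncomputable def A : Fin 2 → Fin 4 → ℝ := ![![1, 1, 0, 0.2], ![1, 0, 1, 0.2]]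

/-- Cumulative gain of participant `p` under schedule `Γ`. -/
noncomputable def CG (p : Fin 2) (Γ : Fin 2 → Fin 4) : ℝ := ∑ t, V t * A p (Γ t)

instance : Nonempty (Fin 2 ↪ Fin 4) := ⟨⟨![0, 1], by decide⟩⟩

/-- Ideal cumulative gain: maximum over injective schedules. -/
noncomputable def ICG (p : Fin 2) : ℝ :=
  Finset.univ.sup' Finset.univ_nonempty (fun f : Fin 2 ↪ Fin 4 => CG p f)

/-- Normalized cumulative gain. -/
noncomputable def NCG (p : Fin 2) (Γ : Fin 2 → Fin 4) : ℝ := CG p Γ / ICG p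

/-- Expected crowd at talk `t`. -/
noncomputable def EC (t : Fin 2) (Γ : Fin 2 → Fin 4) : ℝ :=
  ∑ p : Fin 2, V t * A p (Γ t)

/-- Ideal expected crowd at talk `t`: best single slot. -/
noncomputable def IEC (t : Fin 2) : ℝ :=
  Finset.univ.sup' Finset.univ_nonempty (fun s : Fin 4 => ∑ p : Fin 2, V t * A p s)

/-- Normalized expected crowd. -/
noncomputable def NEC (t : Fin 2) (Γ : Fin 2 → Fin 4) : ℝ := EC t Γ / IEC t

/-- Participant unfairness. -/
noncomputable def ΨP (Γ : Fin 2 → Fin 4) : ℝ :=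
  max (NCG 0 Γ) (NCG 1 Γ) - min (NCG 0 Γ) (NCG 1 Γ)

/-- Speaker unfairness. -/
noncomputable def ΨS (Γ : Fin 2 → Fin 4) : ℝ :=
  max (NEC 0 Γ) (NEC 1 Γ) - min (NEC 0 Γ) (NEC 1 Γ)

/-- The speaker-fair schedule: t₁ ↦ s₂, t₂ ↦ s₃. -/
def Γ : Fin 2 → Fin 4 := ![1, 2]

/-- The participant-fair schedule: t₁ ↦ s₁, t₂ ↦ s₄. -/
def Γ' : Fin 2 → Fin 4 := ![0, 3]

theorem _root_.Finset.sup'_eq_of_le_of_mem {α β : Type*} [SemilatticeSup α] {s : Finset β}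
    {H : s.Nonempty} {f : β → α} {a : α} (hle : ∀ b ∈ s, f b ≤ a) {b : β} (hb : b ∈ s)
    (hfb : f b = a) : s.sup' H f = a :=
  le_antisymm (Finset.sup'_le H f hle) (hfb ▸ Finset.le_sup' f hb)

lemma V_nonneg (t : Fin 2) : 0 ≤ V t := by
  fin_cases t <;> norm_num [V]

lemma A_le_one (p : Fin 2) (s : Fin 4) : A p s ≤ 1 := by
  fin_cases p <;> fin_cases s <;> norm_num [A]

lemma CG_le (p : Fin 2) (Γ : Fin 2 → Fin 4) : CG p Γ ≤ 1.7 :=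
  calc CG p Γ ≤ ∑ t, V t := Finset.sum_le_sum fun t _ ↦
        mul_le_of_le_one_right (V_nonneg t) (A_le_one p (Γ t))
    _ = 1.7 := by norm_num [V]

lemma ICG_eq (p : Fin 2) : ICG p = 1.7 := by
  have hfull (f : Fin 2 ↪ Fin 4) (h0 : A p (f 0) = 1) (h1 : A p (f 1) = 1) : CG p f = 1.7 := by
    norm_num [CG, h0, h1, V]
  fin_cases p
  · exact Finset.sup'_eq_of_le_of_mem (fun f _ ↦ CG_le 0 f)
      (Finset.mem_univ ⟨![0, 1], by decide⟩) (hfull _ rfl rfl)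
  · exact Finset.sup'_eq_of_le_of_mem (fun f _ ↦ CG_le 1 f)
      (Finset.mem_univ ⟨![0, 2], by decide⟩) (hfull _ rfl rfl)

lemma IEC_eq (t : Fin 2) : IEC t = 2 * V t := by
  refine Finset.sup'_eq_of_le_of_mem (fun s _ ↦ ?_) (Finset.mem_univ 0) ?_
  · calc ∑ p, V t * A p s ≤ ∑ _p : Fin 2, V t := Finset.sum_le_sum fun p _ ↦
          mul_le_of_le_one_right (V_nonneg t) (A_le_one p s)
      _ = 2 * V t := by simp
  · simp [Fin.sum_univ_two, A, two_mul]

lemma NEC_eq (t : Fin 2) (Γ : Fin 2 → Fin 4) : NEC t Γ = (∑ p, A p (Γ t)) / 2 := by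
  have hV : V t ≠ 0 := by fin_cases t <;> norm_num [V]
  rw [NEC, EC, IEC_eq, ← Finset.mul_sum]
  field_simp

lemma NCG_eq (p : Fin 2) (Γ : Fin 2 → Fin 4) : NCG p Γ = CG p Γ / 1.7 := by
  rw [NCG, ICG_eq]

lemma ΨP_eq_abs (Γ : Fin 2 → Fin 4) : ΨP Γ = |NCG 0 Γ - NCG 1 Γ| :=
  max_sub_min_eq_abs' _ _

lemma ΨS_eq_abs (Γ : Fin 2 → Fin 4) : ΨS Γ = |NEC 0 Γ - NEC 1 Γ| :=
  max_sub_min_eq_abs' _ _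

/-- tension between participant fairness and speaker fairness. -/
theorem participant_speaker_fairness_tension :
    Function.Injective Γ ∧ Function.Injective Γ'
    ∧ NEC 0 Γ = 0.5 ∧ NEC 1 Γ = 0.5 ∧ ΨS Γ = 0
    ∧ NCG 0 Γ = 1 / 1.7 ∧ NCG 1 Γ = 0.7 / 1.7 ∧ 0 < ΨP Γ
    ∧ NCG 0 Γ' = 1.14 / 1.7 ∧ NCG 1 Γ' = 1.14 / 1.7 ∧ ΨP Γ' = 0
    ∧ NEC 0 Γ' = 1 ∧ NEC 1 Γ' = 0.2 ∧ 0 < ΨS Γ' := by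
  refine ⟨by decide, by decide, ?_⟩
  simp only [ΨP_eq_abs, ΨS_eq_abs, NEC_eq, NCG_eq, CG, Fin.sum_univ_two, Γ, Γ', V, A, Matrix.cons_val]
  norm_num

end Stmt7
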